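/- Let n,r ≥ 1 and k = |S_{n,r}|. For a finite abelian group G of order k and a surjective group homomorphism φ : ℤ^n → G, one has π(n,G,φ) = f(n,k) if and only if the restriction of φ to S_{n,r} is a bijection onto G. -/

import Mathlib

open Set

/-- The Lee (Manhattan) distance between two words in `ℤ^n`. -/
def leeDist {n : ℕ} (v w : Fin n → ℤ) : ℕ := ∑ i, (v i - w i).natAbs

/-- The Lee sphere `S_{n,r}` of radius `r` centered at the origin. -/
def leeSphere (n r : ℕ) : Set (Fin n → ℤ) := {x | leeDist x 0 ≤ r}

/-- `|S_{n,r}|`, the cardinality of the Lee sphere. -/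
noncomputable def sphereCard (n r : ℕ) : ℕ := (leeSphere n r).ncard

/-- `π(n,G,φ,g)`: the minimum Lee distance from the origin of a preimage of `g` under `φ`. -/
noncomputable def piMinDist {n : ℕ} {G : Type*} [AddCommGroup G]
    (φ : (Fin n → ℤ) →+ G) (g : G) : ℕ :=
  sInf {d | ∃ x : Fin n → ℤ, φ x = g ∧ leeDist x 0 = d}

/-- `π(n,G,φ) = ∑_{g ∈ G} π(n,G,φ,g)`. -/
noncomputable def piEmbed {n : ℕ} {G : Type*} [AddCommGroup G] [Fintype G]
    (φ : (Fin n → ℤ) →+ G) : ℕ :=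
  ∑ g : G, piMinDist φ g

/-- `f(n,k) = ∑_{i=1}^r i(|S_{n,i}| − |S_{n,i−1}|) + (r+1)(k − |S_{n,r}|)`,
where `r` is the unique integer with `|S_{n,r}| ≤ k < |S_{n,r+1}|`. -/
noncomputable def fnk (n k r : ℕ) : ℕ :=
  (∑ i ∈ Finset.Icc 1 r, i * (sphereCard n i - sphereCard n (i - 1)))
    + (r + 1) * (k - sphereCard n r)

/-!
Write `t i = |φ(S_{n,i})|`. Since `π(n,G,φ,g) > i` exactly when `g ∉ φ(S_{n,i})`, layer-cake
summation gives `π(n,G,φ) = ∑_{i ≥ 0} (k - t i)`, while `f(n,|S_{n,r}|) = ∑_{i ≥ 0} (k - |S_{n,i}|)`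
because `|S_{n,i}| ≥ k` for `i ≥ r`. As `t i ≤ |S_{n,i}|`, the first sum dominates the second
termwise, so equality holds iff `k - t i = k - |S_{n,i}|` for every `i`. For a bijection this is
injectivity on `S_{n,i}` (`i ≤ r`) and surjectivity (`i ≥ r`); conversely the term `i = r` gives
`t r = k = |S_{n,r}|`, so `φ` is injective on `S_{n,r}` and onto `G` by counting.
-/

lemma natAbs_le_leeDist {n : ℕ} (x : Fin n → ℤ) (j : Fin n) : (x j).natAbs ≤ leeDist x 0 := by
  simpa [leeDist] using
    Finset.single_le_sum (f := fun i => (x i - 0).natAbs) (by simp) (Finset.mem_univ j)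

lemma leeSphere_finite (n r : ℕ) : (leeSphere n r).Finite := by
  refine (Set.Finite.pi fun _ : Fin n => Set.finite_Icc (-(r : ℤ)) r).subset fun x hx j _ => ?_
  have := (natAbs_le_leeDist x j).trans hx
  simp only [Set.mem_Icc]
  omega

lemma leeSphere_mono (n : ℕ) : Monotone (leeSphere n) :=
  fun _ _ h _ hx => le_trans hx h

lemma sphereCard_mono (n : ℕ) : Monotone (sphereCard n) :=
  fun _ j h => Set.ncard_le_ncard (leeSphere_mono n h) (leeSphere_finite n j)

lemma piMinDist_le_iff {n : ℕ} {G : Type*} [AddCommGroup G] {φ : (Fin n → ℤ) →+ G}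
    (hφ : Function.Surjective φ) (g : G) (i : ℕ) :
    piMinDist φ g ≤ i ↔ g ∈ φ '' leeSphere n i := by
  obtain ⟨x₀, hx₀⟩ := hφ g
  unfold piMinDist
  constructor
  · intro h
    obtain ⟨x, hx, hd⟩ := Nat.sInf_mem (s := {d | ∃ x, φ x = g ∧ leeDist x 0 = d})
      ⟨leeDist x₀ 0, x₀, hx₀, rfl⟩
    exact ⟨x, show leeDist x 0 ≤ i from hd.le.trans h, hx⟩
  · rintro ⟨x, hx, rfl⟩
    exact (Nat.sInf_le (s := {d | ∃ x', φ x' = φ x ∧ leeDist x' 0 = d}) ⟨x, rfl, rfl⟩).trans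
      hx

lemma card_filter_lt_piMinDist {n : ℕ} {G : Type*} [AddCommGroup G] [Fintype G]
    {φ : (Fin n → ℤ) →+ G} (hφ : Function.Surjective φ) (i : ℕ) :
    (Finset.univ.filter fun g => i < piMinDist φ g).card =
      Nat.card G - (φ '' leeSphere n i).ncard := by
  have hset : {g | i < piMinDist φ g} = (φ '' leeSphere n i)ᶜ := by
    ext g
    simp [← piMinDist_le_iff hφ]
  rw [← Set.ncard_coe_finset, Finset.coe_filter]
  simp only [Finset.mem_univ, true_and]
  rw [hset, Set.ncard_compl]

lemma Finset.sum_eq_sum_range_card_filter_lt {ι : Type*} (s : Finset ι) (f : ι → ℕ) {M : ℕ}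
    (hM : ∀ i ∈ s, f i ≤ M) :
    ∑ i ∈ s, f i = ∑ j ∈ Finset.range M, (s.filter fun i => j < f i).card := by
  have hf : ∀ i ∈ s, f i = ((Finset.range M).filter fun j => j < f i).card := by
    intro i hi
    have hrange : (Finset.range M).filter (fun j => j < f i) = Finset.range (f i) := by
      ext j
      simp only [Finset.mem_filter, Finset.mem_range]
      have := hM i hi
      omega
    rw [hrange, Finset.card_range]
  rw [Finset.sum_congr rfl hf]
  simp only [Finset.card_filter]
  exact Finset.sum_comm

lemma piEmbed_eq_sum_range {n : ℕ} {G : Type*} [AddCommGroup G] [Fintype G]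
    {φ : (Fin n → ℤ) →+ G} (hφ : Function.Surjective φ) {M : ℕ} (hM : ∀ g, piMinDist φ g ≤ M) :
    piEmbed φ = ∑ i ∈ Finset.range M, (Nat.card G - (φ '' leeSphere n i).ncard) := by
  rw [piEmbed, Finset.sum_eq_sum_range_card_filter_lt _ _ fun g _ => hM g]
  exact Finset.sum_congr rfl fun i _ => card_filter_lt_piMinDist hφ i

lemma sum_Icc_mul_sub_eq_sum_range_sub {s : ℕ → ℕ} (hs : Monotone s) (r : ℕ) :
    ∑ i ∈ Finset.Icc 1 r, i * (s i - s (i - 1)) = ∑ i ∈ Finset.range r, (s r - s i) := by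
  induction r with
  | zero => simp
  | succ r ih =>
    have hstep : ∀ i ∈ Finset.range r, s (r + 1) - s i = (s r - s i) + (s (r + 1) - s r) := by
      intro i hi
      have := hs (Finset.mem_range.mp hi).le
      have : s r ≤ s (r + 1) := hs (by omega)
      omega
    rw [Finset.sum_Icc_succ_top (by omega), ih, Finset.sum_range_succ, Finset.sum_congr rfl hstep,
      Finset.sum_add_distrib, Finset.sum_const, Finset.card_range, smul_eq_mul, Nat.add_sub_cancel]
    ring

lemma fnk_sphereCard_eq_sum_range (n r : ℕ) {M : ℕ} (hrM : r ≤ M) :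
    fnk n (sphereCard n r) r = ∑ i ∈ Finset.range M, (sphereCard n r - sphereCard n i) := by
  rw [fnk, Nat.sub_self, mul_zero, add_zero, sum_Icc_mul_sub_eq_sum_range_sub (sphereCard_mono n)]
  refine Finset.sum_subset (Finset.range_subset_range.mpr hrM) fun i _ hi => ?_
  exact Nat.sub_eq_zero_of_le (sphereCard_mono n (by simpa using hi))

lemma bijOn_univ_iff_card_le_ncard_image {α β : Type*} [Finite β] {f : α → β} {s : Set α}
    (hs : s.Finite) (hcard : Nat.card β = s.ncard) :
    Set.BijOn f s Set.univ ↔ Nat.card β ≤ (f '' s).ncard := by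
  constructor
  · intro hf
    rw [hf.image_eq, Set.ncard_univ]
  · intro hle
    have himage : f '' s = Set.univ :=
      Set.eq_of_subset_of_ncard_le (Set.subset_univ _) (by rwa [Set.ncard_univ])
    refine ⟨Set.mapsTo_univ f s, Set.injOn_of_ncard_image_eq ?_ hs, himage.symm.subset⟩
    exact le_antisymm (Set.ncard_image_le hs) (hcard ▸ hle)

lemma card_sub_ncard_image_leeSphere_of_bijOn {n r : ℕ} {β : Type*} [Finite β]
    {f : (Fin n → ℤ) → β} (hf : Set.BijOn f (leeSphere n r) Set.univ) (i : ℕ) :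
    Nat.card β - (f '' leeSphere n i).ncard = Nat.card β - sphereCard n i := by
  rcases le_total i r with hir | hri
  · rw [(hf.injOn.mono (leeSphere_mono n hir)).ncard_image, sphereCard]
  · have hcard : Nat.card β = sphereCard n r := by
      rw [← Set.ncard_univ, ← hf.image_eq, hf.injOn.ncard_image, sphereCard]
    have hsurj : Nat.card β ≤ (f '' leeSphere n i).ncard := by
      rw [← Set.ncard_univ, ← hf.image_eq]
      exact Set.ncard_le_ncard (Set.image_mono (leeSphere_mono n hri))
        ((leeSphere_finite n i).image f)
    have hsphere : Nat.card β ≤ sphereCard n i := hcard ▸ sphereCard_mono n hri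
    omega

theorem embedding_number_eq_iff_bijOn_general
    (n r : ℕ)
    (k : ℕ) (hk : k = sphereCard n r)
    (G : Type) [AddCommGroup G] [Fintype G] (hG : Nat.card G = k)
    (φ : (Fin n → ℤ) →+ G) (hφ : Function.Surjective φ) :
    piEmbed φ = fnk n k r ↔ Set.BijOn φ (leeSphere n r) Set.univ := by
  subst hk
  obtain ⟨M, hrM, hM⟩ : ∃ M, r < M ∧ ∀ g, piMinDist φ g ≤ M :=
    ⟨r + 1 + Finset.univ.sup (piMinDist φ), by omega,
      fun g => (Finset.le_sup (Finset.mem_univ g)).trans (by omega)⟩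
  have hle : ∀ i ∈ Finset.range M,
      Nat.card G - sphereCard n i ≤ Nat.card G - (φ '' leeSphere n i).ncard :=
    fun i _ => Nat.sub_le_sub_left (Set.ncard_image_le (leeSphere_finite n i)) _
  rw [piEmbed_eq_sum_range hφ hM, fnk_sphereCard_eq_sum_range n r hrM.le, ← hG, eq_comm,
    Finset.sum_eq_sum_iff_of_le hle]
  constructor
  · intro h
    have hterm := h r (Finset.mem_range.mpr hrM)
    rw [← hG, Nat.sub_self, eq_comm, Nat.sub_eq_zero_iff_le] at hterm
    exact (bijOn_univ_iff_card_le_ncard_image (leeSphere_finite n r) hG).mpr hterm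
  · exact fun hf i _ => (card_sub_ncard_image_leeSphere_of_bijOn hf i).symm

theorem embedding_number_eq_iff_bijOn
    (n r : ℕ) (hn : 1 ≤ n) (hr : 1 ≤ r)
    (k : ℕ) (hk : k = sphereCard n r)
    (G : Type) [AddCommGroup G] [Fintype G] (hG : Nat.card G = k)
    (φ : (Fin n → ℤ) →+ G) (hφ : Function.Surjective φ) :
    piEmbed φ = fnk n k r ↔ Set.BijOn φ (leeSphere n r) Set.univ :=
  embedding_number_eq_iff_bijOn_general n r k hk G hG φ hφ
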